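/- arXiv:1903.09743 — 6 statements merged into one kernel-verified Lean document; each statement's English description precedes it below -/
import Mathlib

section
/- Let m ≥ 1 and for each i ∈ {1,…,m} let Eᵢ = ℝ^{nᵢ}, let Bᵢ : Eᵢ → ℝ be continuously differentiable, let cᵢ ≥ 0 be a real number, and let 𝒳_{u,i} ⊆ Eᵢ be a set (the unsafe set of subsystem i). Let E = E₁ × ⋯ × Eₘ and let F : E → E be continuous with components Fᵢ : E → Eᵢ. Assume: (i) Bᵢ(0) > cᵢ for every i; (ii) Bᵢ(xᵢ) < 0 for every xᵢ ∈ 𝒳_{u,i} and every i; (iii) for every y ∈ E and every i such that Bᵢ(yᵢ) = cᵢ and Bⱼ(yⱼ) ≥ cⱼ for all j, one has ⟨∇Bᵢ(yᵢ), Fᵢ(y)⟩ > 0. Then for every solution x : [0,∞) → E of ẋ = F(x) with Bᵢ(xᵢ(0)) ≥ cᵢ for all i, it holds for all t ≥ 0 and all i that Bᵢ(xᵢ(t)) ≥ cᵢ, and consequently xᵢ(t) ∉ 𝒳_{u,i}; i.e., the set 𝒟₁[c₁] × ⋯ × 𝒟ₘ[cₘ] is forward invariant and the interconnected system is safe. 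-/
open Filter Set Topology


theorem aux_deriv_pos_right {f : ℝ → ℝ} {d T : ℝ} (hf : HasDerivAt f d T) (hd : 0 < d) :
    ∀ᶠ s in 𝓝[>] T, f T < f s := by
  have h := hasDerivAt_iff_tendsto_slope.mp hf
  have h2 : ∀ᶠ s in 𝓝[≠] T, 0 < slope f T s := h.eventually (eventually_gt_nhds hd)
  have h3 : ∀ᶠ s in 𝓝[>] T, 0 < slope f T s :=
    h2.filter_mono (nhdsWithin_mono T fun s hs => ne_of_gt hs)
  filter_upwards [h3, self_mem_nhdsWithin] with s hs hsT
  have hsT' : (0:ℝ) < s - T := sub_pos.2 hsT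
  rw [slope_def_field, div_pos_iff] at hs
  rcases hs with ⟨h1, _⟩ | ⟨_, h2'⟩
  · linarith
  · linarith



/-- **Distributed barrier certificates (Theorem 1 of the paper).**
For an interconnection of `m ≥ 1` subsystems with states `xᵢ ∈ ℝ^{nᵢ}`, continuously
differentiable functions `Bᵢ`, nonnegative scalars `cᵢ` and unsafe sets `𝒳_{u,i}`,
if `Bᵢ(0) > cᵢ`, `Bᵢ < 0` on `𝒳_{u,i}`, and on the boundary `Bᵢ(yᵢ) = cᵢ` (with all
neighbors satisfying `Bⱼ(yⱼ) ≥ cⱼ`) the derivative of `Bᵢ` along the vector field is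
positive, then the product set `𝒟₁[c₁] × ⋯ × 𝒟ₘ[cₘ]`, `𝒟ᵢ[cᵢ] = {Bᵢ ≥ cᵢ}`, is forward
invariant and every trajectory starting in it avoids all the unsafe sets. -/
theorem distributed_barrier_certificates
    {m : ℕ} (hm : 1 ≤ m) (n : Fin m → ℕ)
    (B : ∀ i : Fin m, EuclideanSpace ℝ (Fin (n i)) → ℝ)
    (hB : ∀ i, ContDiff ℝ 1 (B i))
    (c : Fin m → ℝ) (hc : ∀ i, 0 ≤ c i)
    (Xu : ∀ i : Fin m, Set (EuclideanSpace ℝ (Fin (n i))))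
    (F : (∀ i : Fin m, EuclideanSpace ℝ (Fin (n i))) →
         (∀ i : Fin m, EuclideanSpace ℝ (Fin (n i))))
    (hF : Continuous F)
    (h0 : ∀ i, c i < B i 0)
    (hunsafe : ∀ i, ∀ xi ∈ Xu i, B i xi < 0)
    (hbound : ∀ (y : ∀ i : Fin m, EuclideanSpace ℝ (Fin (n i))) (i : Fin m),
      B i (y i) = c i → (∀ j, c j ≤ B j (y j)) →
      0 < fderiv ℝ (B i) (y i) (F y i)) :
    ∀ x : ℝ → (∀ i : Fin m, EuclideanSpace ℝ (Fin (n i))),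
      (∀ t, 0 ≤ t → HasDerivAt x (F (x t)) t) →
      (∀ i, c i ≤ B i (x 0 i)) →
      ∀ t, 0 ≤ t → ∀ i, c i ≤ B i (x t i) ∧ x t i ∉ Xu i := by
  intro x hx hx0
  have key : ∀ t, 0 ≤ t → ∀ i, c i ≤ B i (x t i) := by
    by_contra hcon
    push_neg at hcon
    obtain ⟨t₀, ht₀, i₀, hi₀⟩ := hcon
    set A : Set ℝ := {t | 0 ≤ t ∧ ∃ i, B i (x t i) < c i} with hA
    have hAne : A.Nonempty := ⟨t₀, ht₀, i₀, hi₀⟩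
    have hAbdd : BddBelow A := ⟨0, fun a ha => ha.1⟩
    set T := sInf A with hT
    have hT0 : 0 ≤ T := le_csInf hAne fun a ha => ha.1
    have hxc : ContinuousAt x T := (hx T hT0).continuousAt
    have hφc : ∀ j, ContinuousAt (fun s => B j (x s j)) T := fun j =>
      ((hB j).continuous.continuousAt).comp (((continuous_apply j).continuousAt).comp hxc)
    -- T is not in A
    have hTA : T ∉ A := by
      rintro ⟨-, i, hi⟩
      rcases eq_or_lt_of_le hT0 with h | h
      · exact absurd hi (not_lt.2 (h ▸ hx0 i))
      · have hev : ∀ᶠ s in 𝓝[<] T, B i (x s i) < c i :=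
          (((hφc i).eventually (eventually_lt_nhds hi)).filter_mono nhdsWithin_le_nhds)
        have hev2 : ∀ᶠ s in 𝓝[<] T, (0:ℝ) < s :=
          ((eventually_gt_nhds h).filter_mono nhdsWithin_le_nhds)
        obtain ⟨s, hs1, hs2, hs3⟩ := (hev.and (hev2.and self_mem_nhdsWithin)).exists
        change s < T at hs3
        exact absurd (csInf_le hAbdd ⟨le_of_lt hs2, i, hs1⟩) (not_le.2 hs3)
    have hgeT : ∀ j, c j ≤ B j (x T j) := by
      intro j
      by_contra hj
      exact hTA ⟨hT0, j, not_le.1 hj⟩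
    -- eventually to the right, all coordinates strictly above c
    have hev : ∀ᶠ s in 𝓝[>] T, ∀ i, c i < B i (x s i) := by
      rw [eventually_all]
      intro i
      rcases (hgeT i).lt_or_eq with hlt | heq
      · exact ((hφc i).eventually (eventually_gt_nhds hlt)).filter_mono nhdsWithin_le_nhds
      · have hd : 0 < fderiv ℝ (B i) (x T i) (F (x T) i) := hbound (x T) i heq.symm hgeT
        have hderiv : HasDerivAt (fun s => B i (x s i))
            (fderiv ℝ (B i) (x T i) (F (x T) i)) T := by
          have hcoord : HasDerivAt (fun s => x s i) (F (x T) i) T :=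
            (ContinuousLinearMap.proj (R := ℝ)
              (φ := fun j => EuclideanSpace ℝ (Fin (n j))) i).hasFDerivAt.comp_hasDerivAt T
              (hx T hT0)
          exact ((((hB i).differentiable one_ne_zero) (x T i)).hasFDerivAt).comp_hasDerivAt T hcoord
        have := aux_deriv_pos_right hderiv hd
        filter_upwards [this] with s hs
        rw [heq]; exact hs
    obtain ⟨u, hu, huIoo⟩ := mem_nhdsGT_iff_exists_Ioo_subset.mp hev
    obtain ⟨a, haA, hau⟩ := exists_lt_of_csInf_lt hAne (show sInf A < u from hu)
    have hTa : T ≤ a := csInf_le hAbdd haA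
    have hTa' : T < a := lt_of_le_of_ne hTa (fun h => hTA (h ▸ haA))
    obtain ⟨-, i, hi⟩ := haA
    exact absurd (huIoo ⟨hTa', hau⟩ i) (not_lt.2 (le_of_lt hi))
  intro t ht i
  refine ⟨key t ht i, fun hmem => ?_⟩
  exact absurd (hunsafe i _ hmem) (not_lt.2 (le_trans (hc i) (key t ht i)))
end

section
/- Let f : ℝⁿ → ℝⁿ be locally Lipschitz, let B : ℝⁿ → ℝ be continuously differentiable, let 𝒳_u ⊆ ℝⁿ, and let α : ℝ → ℝ be an extended class-K function. Assume: (i) B(x) < 0 for all x ∈ 𝒳_u; (ii) ⟨∇B(x), f(x)⟩ + α(B(x)) ≥ 0 for all x ∈ ℝⁿ. Then for every solution x : [0,∞) → ℝⁿ of ẋ = f(x) with B(x(0)) ≥ 0, it holds that B(x(t)) ≥ 0 for all t ≥ 0; in particular the set {x : B(x) ≥ 0} is forward invariant and x(t) ∉ 𝒳_u for all t ≥ 0. -/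
/-- **Barrier-function safety certificate.**
If `f : ℝⁿ → ℝⁿ` is locally Lipschitz, `B` is continuously differentiable, `α` is an
extended class-K function (continuous, strictly increasing, `α(0) = 0`), `B < 0` on the
unsafe set `𝒳_u`, and `⟨∇B(x), f(x)⟩ + α(B(x)) ≥ 0` for all `x`, then along every solution
of `ẋ = f(x)` with `B(x(0)) ≥ 0` we have `B(x(t)) ≥ 0` for all `t ≥ 0`; in particular the
set `{B ≥ 0}` is forward invariant and the trajectory never enters `𝒳_u`. -/
theorem barrier_function_safety
    {n : ℕ}
    (f : EuclideanSpace ℝ (Fin n) → EuclideanSpace ℝ (Fin n))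
    (hf : LocallyLipschitz f)
    (B : EuclideanSpace ℝ (Fin n) → ℝ) (hB : ContDiff ℝ 1 B)
    (Xu : Set (EuclideanSpace ℝ (Fin n)))
    (α : ℝ → ℝ) (hαcont : Continuous α) (hαmono : StrictMono α) (hα0 : α 0 = 0)
    (hunsafe : ∀ x ∈ Xu, B x < 0)
    (hderivcond : ∀ x, 0 ≤ fderiv ℝ B x (f x) + α (B x)) :
    ∀ x : ℝ → EuclideanSpace ℝ (Fin n),
      (∀ t, 0 ≤ t → HasDerivAt x (f (x t)) t) →
      0 ≤ B (x 0) →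
      ∀ t, 0 ≤ t → 0 ≤ B (x t) ∧ x t ∉ Xu := by
  intro x hx hx0 t ht
  set g : ℝ → ℝ := fun t => B (x t) with hg_def
  -- derivative of g
  have hg' : ∀ s : ℝ, 0 ≤ s → HasDerivAt g (fderiv ℝ B (x s) (f (x s))) s := by
    intro s hs
    exact ((hB.differentiable one_ne_zero (x s)).hasFDerivAt).comp_hasDerivAt s (hx s hs)
  have hgcont : ∀ s : ℝ, 0 ≤ s → ContinuousAt g s := fun s hs => (hg' s hs).continuousAt
  have key : 0 ≤ g t := by
    by_contra hneg
    push_neg at hneg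
    have ht0 : 0 < t := by
      rcases lt_or_eq_of_le ht with h | h
      · exact h
      · exact absurd hx0 (by simpa [g, ← h] using not_le.mpr hneg)
    set S : Set ℝ := Set.Icc 0 t ∩ g ⁻¹' Set.Ici 0 with hS_def
    have hScl : IsClosed S := by
      apply ContinuousOn.preimage_isClosed_of_isClosed ?_ isClosed_Icc isClosed_Ici
      intro s hs
      exact (hgcont s hs.1).continuousWithinAt
    have h0S : (0 : ℝ) ∈ S := ⟨⟨le_refl 0, le_of_lt ht0⟩, hx0⟩
    have hSne : S.Nonempty := ⟨0, h0S⟩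
    have hSbdd : BddAbove S := ⟨t, fun s hs => hs.1.2⟩
    set s := sSup S with hs_def
    have hsS : s ∈ S := hScl.csSup_mem hSne hSbdd
    have hs0 : 0 ≤ s := hsS.1.1
    have hst : s ≤ t := hsS.1.2
    have hgs : 0 ≤ g s := hsS.2
    have hslt : s < t := hst.lt_of_ne (fun h => absurd hgs (by rw [h]; exact not_le.mpr hneg))
    -- on (s, t], g < 0
    have hneg' : ∀ u, s < u → u ≤ t → g u < 0 := by
      intro u hu hut
      by_contra h
      push_neg at h
      have : u ∈ S := ⟨⟨le_trans hs0 hu.le, hut⟩, h⟩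
      exact absurd (le_csSup hSbdd this) (not_le.mpr hu)
    -- g is strictly monotone on [s, t]
    have hmono : StrictMonoOn g (Set.Icc s t) := by
      apply strictMonoOn_of_deriv_pos (convex_Icc s t)
      · intro u hu
        exact (hgcont u (le_trans hs0 hu.1)).continuousWithinAt
      · intro u hu
        rw [interior_Icc] at hu
        have hu0 : 0 ≤ u := le_trans hs0 hu.1.le
        have hderiv : deriv g u = fderiv ℝ B (x u) (f (x u)) := (hg' u hu0).deriv
        have hgu : g u < 0 := hneg' u hu.1 hu.2.le
        have hα : α (g u) < 0 := by
          have := hαmono hgu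
          rwa [hα0] at this
        have := hderivcond (x u)
        rw [hderiv]
        calc (0:ℝ) < -α (g u) := by linarith
          _ ≤ fderiv ℝ B (x u) (f (x u)) := by
              have := hderivcond (x u); simp only [g] at hα ⊢; linarith
    have : g s < g t := hmono ⟨le_refl s, hst⟩ ⟨hst, le_refl t⟩ hslt
    linarith
  refine ⟨key, fun hmem => ?_⟩
  exact absurd key (not_le.mpr (hunsafe _ hmem))
end

section
/- Let α : ℝ → ℝ be an extended class-K function and let b : [0,∞) → ℝ be differentiable with b(0) ≥ 0 and b′(t) ≥ −α(b(t)) for all t ≥ 0. Then b(t) ≥ 0 for all t ≥ 0. -/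
/-- **Scalar comparison lemma for barrier certificates.**
If `α : ℝ → ℝ` is an extended class-K function (continuous, strictly increasing,
`α(0) = 0`) and `b : [0,∞) → ℝ` is differentiable with `b(0) ≥ 0` and
`b'(t) ≥ -α(b(t))` for all `t ≥ 0`, then `b(t) ≥ 0` for all `t ≥ 0`. -/
theorem barrier_comparison_lemma
    (α : ℝ → ℝ) (hαcont : Continuous α) (hαmono : StrictMono α) (hα0 : α 0 = 0)
    (b b' : ℝ → ℝ)
    (hderiv : ∀ t, 0 ≤ t → HasDerivAt b (b' t) t)
    (h0 : 0 ≤ b 0)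
    (hcomp : ∀ t, 0 ≤ t → -α (b t) ≤ b' t) :
    ∀ t, 0 ≤ t → 0 ≤ b t := by
  intro t₀ ht₀
  by_contra hneg
  push_neg at hneg
  -- b is continuous on [0, t₀]
  have hbcont : ContinuousOn b (Set.Icc 0 t₀) := by
    intro x hx
    exact ((hderiv x hx.1).continuousAt).continuousWithinAt
  -- S = times in [0,t₀] where b ≥ 0
  set S : Set ℝ := Set.Icc 0 t₀ ∩ b ⁻¹' Set.Ici 0 with hS
  have hSne : S.Nonempty := ⟨0, ⟨le_refl 0, ht₀⟩, h0⟩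
  have hSbdd : BddAbove S := ⟨t₀, fun x hx => hx.1.2⟩
  have hSclosed : IsClosed S :=
    hbcont.preimage_isClosed_of_isClosed isClosed_Icc isClosed_Ici
  set s : ℝ := sSup S with hsdef
  have hsmem : s ∈ S := hSclosed.csSup_mem hSne hSbdd
  have hs0 : 0 ≤ s := hsmem.1.1
  have hbs : 0 ≤ b s := hsmem.2
  have hst : s < t₀ := by
    rcases lt_or_eq_of_le hsmem.1.2 with h | h
    · exact h
    · exact absurd (h ▸ hbs) (not_le.mpr hneg)
  -- On (s, t₀], b < 0
  have hlt : ∀ x, s < x → x ≤ t₀ → b x < 0 := by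
    intro x hsx hxt
    by_contra hc
    push_neg at hc
    have : x ∈ S := ⟨⟨hs0.trans hsx.le, hxt⟩, hc⟩
    exact absurd (le_csSup hSbdd this) (not_le.mpr hsx)
  -- b is strictly monotone on [s, t₀] since deriv > 0 on interior
  have hmono : StrictMonoOn b (Set.Icc s t₀) := by
    apply strictMonoOn_of_deriv_pos (convex_Icc s t₀)
    · exact hbcont.mono (Set.Icc_subset_Icc hs0 le_rfl)
    · intro x hx
      rw [interior_Icc] at hx
      have hx0 : 0 ≤ x := hs0.trans hx.1.le
      have hbx : b x < 0 := hlt x hx.1 hx.2.le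
      have : 0 < b' x := by
        have := hcomp x hx0
        have hα : α (b x) < 0 := hα0 ▸ hαmono hbx
        linarith
      rwa [(hderiv x hx0).deriv]
  have := hmono (Set.left_mem_Icc.mpr hst.le) (Set.right_mem_Icc.mpr hst.le) hst
  linarith
end

section
/- Let f : ℝⁿ → ℝⁿ be locally Lipschitz with f(0) = 0, and suppose there exists a continuously differentiable function V : ℝⁿ → ℝ with V(0) = 0, V(x) > 0 for all x ≠ 0, V radially unbounded (V(x) → ∞ as ‖x‖ → ∞), and ⟨∇V(x), f(x)⟩ < 0 for all x ≠ 0. Then the origin is globally asymptotically stable: (i) for every ε > 0 there exists δ > 0 such that every solution x : [0,∞) → ℝⁿ of ẋ = f(x) with ‖x(0)‖ < δ satisfies ‖x(t)‖ < ε for all t ≥ 0; and (ii) every solution x : [0,∞) → ℝⁿ of ẋ = f(x) satisfies x(t) → 0 as t → ∞. -/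
open Set Filter Metric


/-- **Lyapunov's theorem (global asymptotic stability), Theorem 1 of the paper.**
Let `f : ℝⁿ → ℝⁿ` be locally Lipschitz with `f(0) = 0` and let `V` be a continuously
differentiable, positive definite, radially unbounded function whose derivative along `f`
is negative away from the origin. Then the origin is globally asymptotically stable:
(i) Lyapunov stability, and (ii) every solution on `[0,∞)` converges to the origin. -/
theorem lyapunov_global_asymptotic_stability
    {n : ℕ}
    (f : EuclideanSpace ℝ (Fin n) → EuclideanSpace ℝ (Fin n))
    (hf : LocallyLipschitz f) (hf0 : f 0 = 0)
    (V : EuclideanSpace ℝ (Fin n) → ℝ) (hV : ContDiff ℝ 1 V)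
    (hV0 : V 0 = 0)
    (hVpos : ∀ x, x ≠ 0 → 0 < V x)
    (hVrad : Filter.Tendsto V (Filter.comap norm Filter.atTop) Filter.atTop)
    (hVdec : ∀ x, x ≠ 0 → fderiv ℝ V x (f x) < 0) :
    (∀ ε > (0 : ℝ), ∃ δ > (0 : ℝ),
      ∀ x : ℝ → EuclideanSpace ℝ (Fin n),
        (∀ t, 0 ≤ t → HasDerivAt x (f (x t)) t) →
        ‖x 0‖ < δ → ∀ t, 0 ≤ t → ‖x t‖ < ε) ∧
    (∀ x : ℝ → EuclideanSpace ℝ (Fin n),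
      (∀ t, 0 ≤ t → HasDerivAt x (f (x t)) t) →
      Filter.Tendsto x Filter.atTop (nhds 0)) := by
  have hVd : Differentiable ℝ V := hV.differentiable one_ne_zero
  have hVcont : Continuous V := hVd.continuous
  have hW0 : ∀ z : EuclideanSpace ℝ (Fin n), fderiv ℝ V z (f z) ≤ 0 := by
    intro z
    by_cases hz : z = 0
    · subst hz; simp [hf0]
    · exact (hVdec z hz).le
  have hVnonneg : ∀ z : EuclideanSpace ℝ (Fin n), 0 ≤ V z := by
    intro z
    by_cases hz : z = 0
    · subst hz; simp [hV0]
    · exact (hVpos z hz).le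
  have hWcont : Continuous fun z : EuclideanSpace ℝ (Fin n) => fderiv ℝ V z (f z) :=
    (hV.continuous_fderiv one_ne_zero).clm_apply hf.continuous
  -- composite derivative
  have hcomp : ∀ (x : ℝ → EuclideanSpace ℝ (Fin n)), (∀ t, 0 ≤ t → HasDerivAt x (f (x t)) t) →
      ∀ t, 0 ≤ t → HasDerivAt (fun s => V (x s)) (fderiv ℝ V (x t) (f (x t))) t := by
    intro x hx t ht
    exact (hVd (x t)).hasFDerivAt.comp_hasDerivAt t (hx t ht)
  -- general monotonicity lemma with linear correction
  have mono : ∀ (x : ℝ → EuclideanSpace ℝ (Fin n)), (∀ t, 0 ≤ t → HasDerivAt x (f (x t)) t) → ∀ a : ℝ,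
      (∀ t, 0 ≤ t → fderiv ℝ V (x t) (f (x t)) + a ≤ 0) →
      AntitoneOn (fun t => V (x t) + a * t) (Set.Ici 0) := by
    intro x hx a ha
    have hder : ∀ t, 0 ≤ t →
        HasDerivAt (fun s => V (x s) + a * s) (fderiv ℝ V (x t) (f (x t)) + a) t := by
      intro t ht
      exact (hcomp x hx t ht).add (by simpa using (hasDerivAt_id t).const_mul a)
    apply antitoneOn_of_deriv_nonpos (convex_Ici 0)
    · intro t ht
      exact ((hder t ht).continuousAt).continuousWithinAt
    · intro t ht
      rw [interior_Ici] at ht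
      exact ((hder t (le_of_lt ht)).differentiableAt).differentiableWithinAt
    · intro t ht
      rw [interior_Ici] at ht
      rw [(hder t (le_of_lt ht)).deriv]
      exact ha t (le_of_lt ht)
  have mono0 : ∀ (x : ℝ → EuclideanSpace ℝ (Fin n)), (∀ t, 0 ≤ t → HasDerivAt x (f (x t)) t) →
      AntitoneOn (fun t => V (x t)) (Set.Ici 0) := by
    intro x hx
    have := mono x hx 0 (fun t ht => by simpa using hW0 (x t))
    simpa using this
  -- compactness of sublevel sets
  have hsub : ∀ a : ℝ, IsCompact {z : EuclideanSpace ℝ (Fin n) | V z ≤ a} := by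
    intro a
    have hclosed : IsClosed {z : EuclideanSpace ℝ (Fin n) | V z ≤ a} :=
      isClosed_le hVcont continuous_const
    have hev : ∀ᶠ z in Filter.comap norm Filter.atTop, a < V z :=
      hVrad.eventually (eventually_gt_atTop a)
    rw [eventually_comap] at hev
    obtain ⟨R, hR⟩ := eventually_atTop.mp hev
    have hbd : {z : EuclideanSpace ℝ (Fin n) | V z ≤ a} ⊆ Metric.closedBall 0 R := by
      intro z hz
      rw [Metric.mem_closedBall, dist_zero_right]
      by_contra hzR
      push_neg at hzR
      exact absurd hz (not_le.mpr (hR ‖z‖ hzR.le z rfl))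
    exact Metric.isCompact_of_isClosed_isBounded hclosed
      (Bornology.IsBounded.subset (Metric.isBounded_closedBall) hbd)
  constructor
  · -- Stability
    intro ε hε
    rcases subsingleton_or_nontrivial (EuclideanSpace ℝ (Fin n)) with hE | hE
    · refine ⟨1, one_pos, fun x hx h0 t ht => ?_⟩
      have : x t = 0 := Subsingleton.elim _ _
      simpa [this]
    · obtain ⟨z0, hz0mem, hz0min⟩ :=
        (isCompact_sphere (0 : EuclideanSpace ℝ (Fin n)) ε).exists_isMinOn
          (NormedSpace.sphere_nonempty.mpr hε.le) hVcont.continuousOn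
      have hz0ne : z0 ≠ 0 := by
        intro h
        rw [mem_sphere_zero_iff_norm, h, norm_zero] at hz0mem
        exact hε.ne hz0mem
      set c := V z0 with hc
      have hcpos : 0 < c := hVpos z0 hz0ne
      have : ∀ᶠ z : EuclideanSpace ℝ (Fin n) in nhds 0, V z < c := by
        have h0 : Filter.Tendsto V (nhds (0 : EuclideanSpace ℝ (Fin n))) (nhds 0) := by
          simpa [hV0] using hVcont.tendsto (0 : EuclideanSpace ℝ (Fin n))
        exact h0.eventually_lt_const hcpos
      obtain ⟨δ', hδ', hδ'c⟩ := Metric.eventually_nhds_iff.mp this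
      refine ⟨min δ' ε, lt_min hδ' hε, fun x hx h0 t ht => ?_⟩
      by_contra hcon
      push_neg at hcon
      -- IVT to find s with ‖x s‖ = ε
      have hxc : ContinuousOn (fun s => ‖x s‖) (Set.Icc 0 t) := by
        intro s hs
        exact (((hx s hs.1).continuousAt).norm).continuousWithinAt
      have h0ε : ‖x 0‖ ≤ ε := (lt_of_lt_of_le h0 (min_le_right _ _)).le
      have hmem : ε ∈ Set.Icc ‖x 0‖ ‖x t‖ := ⟨h0ε, hcon⟩
      obtain ⟨s, hs, hsε⟩ := intermediate_value_Icc ht hxc hmem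
      have hVs : c ≤ V (x s) := by
        apply hz0min
        rwa [mem_sphere_zero_iff_norm]
      have hV0x : V (x 0) < c := by
        apply hδ'c
        rw [dist_zero_right]
        exact lt_of_lt_of_le h0 (min_le_left _ _)
      have := mono0 x hx (Set.self_mem_Ici) hs.1 hs.1
      simp only at this
      linarith
  · -- Attractivity
    intro x hx
    rw [Metric.tendsto_nhds]
    intro ε hε
    set g : ℝ → ℝ := fun t => V (x t) with hg
    have hmonog := mono0 x hx
    -- the key: eventually V (x t) < any m > 0
    have key : ∀ m : ℝ, 0 < m → ∃ T : ℝ, 0 ≤ T ∧ g T < m := by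
      intro m hm
      by_contra hcon
      push_neg at hcon
      set B := {z : EuclideanSpace ℝ (Fin n) | m ≤ V z ∧ V z ≤ g 0} with hB
      have hBcomp : IsCompact B := (hsub (g 0)).of_isClosed_subset
        (IsClosed.inter (isClosed_le continuous_const hVcont)
          (isClosed_le hVcont continuous_const))
        (fun z hz => hz.2)
      have hBne : B.Nonempty := ⟨x 0, hcon 0 le_rfl, le_rfl⟩
      obtain ⟨z1, hz1B, hz1max⟩ := hBcomp.exists_isMaxOn hBne hWcont.continuousOn
      have hz1ne : z1 ≠ 0 := by
        intro h
        have := hz1B.1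
        rw [h, hV0] at this
        linarith
      have ha : fderiv ℝ V z1 (f z1) < 0 := hVdec z1 hz1ne
      set a := -(fderiv ℝ V z1 (f z1)) with haa
      have hapos : 0 < a := by simp [haa]; linarith
      have hxB : ∀ t, 0 ≤ t → x t ∈ B := by
        intro t ht
        exact ⟨hcon t ht, hmonog (Set.self_mem_Ici) ht ht⟩
      have hmono2 := mono x hx a (fun t ht => by
        have h3 := hz1max (hxB t ht)
        simp only [Set.mem_setOf_eq] at h3
        simp only [haa]
        linarith)
      -- evaluate at t := (g 0 + 1) / a
      set T := (g 0 + 1) / a with hT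
      have hT0 : 0 ≤ T := div_nonneg (by have := hVnonneg (x 0); linarith) hapos.le
      have h2 := hmono2 (Set.self_mem_Ici) hT0 hT0
      simp only at h2
      have haT : a * T = g 0 + 1 := by
        rw [hT, mul_div_cancel₀ _ hapos.ne']
      rw [haT] at h2
      have := hVnonneg (x T)
      have : g T = V (x T) := rfl
      linarith [hVnonneg (x T)]
    -- now finish
    set A := {z : EuclideanSpace ℝ (Fin n) | ε ≤ ‖z‖ ∧ V z ≤ g 0} with hA
    by_cases hAe : A.Nonempty
    · have hAcomp : IsCompact A := (hsub (g 0)).of_isClosed_subset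
        (IsClosed.inter (isClosed_le continuous_const continuous_norm)
          (isClosed_le hVcont continuous_const))
        (fun z hz => hz.2)
      obtain ⟨z2, hz2A, hz2min⟩ := hAcomp.exists_isMinOn hAe hVcont.continuousOn
      have hz2ne : z2 ≠ 0 := by
        intro h
        have := hz2A.1
        rw [h, norm_zero] at this
        linarith
      have hmpos : 0 < V z2 := hVpos z2 hz2ne
      obtain ⟨T, hT0, hTlt⟩ := key (V z2) hmpos
      rw [eventually_atTop]
      refine ⟨T, fun t htT => ?_⟩
      have ht0 : 0 ≤ t := le_trans hT0 htT
      have hgt : g t ≤ g T := hmonog hT0 ht0 htT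
      have hnotA : x t ∉ A := by
        intro hmem
        have h4 := hz2min hmem
        simp only [Set.mem_setOf_eq] at h4
        simp only [hg] at hgt hTlt
        linarith
      rw [dist_zero_right]
      by_contra hcon2
      push_neg at hcon2
      exact hnotA ⟨hcon2, hmonog (Set.self_mem_Ici) ht0 ht0⟩
    · rw [eventually_atTop]
      refine ⟨0, fun t ht => ?_⟩
      rw [dist_zero_right]
      by_contra hcon2
      push_neg at hcon2
      exact hAe ⟨x t, hcon2, hmonog (Set.self_mem_Ici) ht ht⟩
end

section
/- Let B, s₁ ∈ ℝ[x₁,…,xₙ] with s₁ a sum of squares, let f : ℝⁿ → ℝⁿ have polynomial components, and let γ ∈ ℝ and η > 0. If the polynomial ⟨∇B, f⟩ + γB − η − s₁B is a sum of squares, then for every x ∈ ℝⁿ with B(x) = 0 one has ⟨∇B(x), f(x)⟩ ≥ η > 0; i.e., the value of B is strictly increasing along trajectories of ẋ = f(x) on the zero level set of B. -/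
open MvPolynomial

/-- A multivariate real polynomial is a sum of squares (SOS) if it is a finite sum of
squares of polynomials. -/
def IsSOS {n : ℕ} (p : MvPolynomial (Fin n) ℝ) : Prop :=
  ∃ (s : ℕ) (h : Fin s → MvPolynomial (Fin n) ℝ), p = ∑ i, (h i) ^ 2

/-- **Soundness of the derivative constraint in Step k-2 of the barrier algorithm.**
Let `B` be a polynomial, `s₁` an SOS polynomial, `f` a polynomial vector field,
`γ ∈ ℝ` and `η > 0`. If `⟨∇B, f⟩ + γB - η - s₁B` is SOS (where
`⟨∇B, f⟩ = Σₖ (∂B/∂xₖ)·fₖ`), then at every point of the zero level set `B(x) = 0` one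
has `⟨∇B(x), f(x)⟩ ≥ η > 0`: the value of `B` strictly increases along the trajectories
of `ẋ = f(x)` on `{B = 0}`. -/
theorem barrier_derivative_constraint_soundness
    {n : ℕ}
    (B s₁ : MvPolynomial (Fin n) ℝ) (hs₁ : IsSOS s₁)
    (f : Fin n → MvPolynomial (Fin n) ℝ)
    (γ η : ℝ) (hη : 0 < η)
    (hsos : IsSOS (∑ k, pderiv k B * f k + C γ * B - C η - s₁ * B)) :
    ∀ x : Fin n → ℝ, eval x B = 0 →
      η ≤ eval x (∑ k, pderiv k B * f k) ∧
      0 < eval x (∑ k, pderiv k B * f k) := by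
  intro x hx
  obtain ⟨s, h, hh⟩ := hsos
  have h0 : 0 ≤ eval x (∑ k, pderiv k B * f k + C γ * B - C η - s₁ * B) := by
    rw [hh, map_sum]
    exact Finset.sum_nonneg fun i _ => by rw [map_pow]; positivity
  simp [hx] at h0
  simp only [map_sum, map_mul]
  constructor <;> linarith
end

section
/- Let V ∈ ℝ[x₁,…,xₙ], let f : ℝⁿ → ℝⁿ have polynomial components, let ε₁ > 0 and ε₂ > 0, and let s₃, s₄ ∈ ℝ[x₁,…,xₙ] be sums of squares. Suppose V − ε₁‖x‖² is a sum of squares and −s₃·(1 − V) − s₄·⟨∇V, f⟩ − ε₂‖x‖² is a sum of squares. Then: (i) V(x) ≥ ε₁‖x‖² for all x, so V is positive definite and radially unbounded; and (ii) for every x ≠ 0 with V(x) ≤ 1, one has s₄(x) > 0 and ⟨∇V(x), f(x)⟩ < 0; i.e., V is a Lyapunov function whose derivative along f is negative on the punctured sublevel set {V ≤ 1} \ {0}. -/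
open MvPolynomial

lemma sos_eval_nonneg {n : ℕ} {p : MvPolynomial (Fin n) ℝ} (hp : IsSOS p)
    (x : Fin n → ℝ) : 0 ≤ eval x p := by
  obtain ⟨s, h, rfl⟩ := hp
  simp only [map_sum, map_pow]
  exact Finset.sum_nonneg fun i _ => sq_nonneg _

lemma sumsq_pos {n : ℕ} {x : Fin n → ℝ} (hx : x ≠ 0) : 0 < ∑ i, (x i) ^ 2 := by
  obtain ⟨j, hj⟩ := Function.ne_iff.1 hx
  have hj' : x j ≠ 0 := by simpa using hj
  exact Finset.sum_pos' (fun i _ => sq_nonneg _)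
    ⟨j, Finset.mem_univ j, by positivity⟩

/-- **Soundness of the SOS constraints of the expanding-interior Lyapunov algorithm.**
Let `V` be a polynomial, `f` a polynomial vector field, `ε₁, ε₂ > 0`, and `s₃, s₄` SOS
polynomials. If `V - ε₁‖x‖²` is SOS and `-s₃(1 - V) - s₄⟨∇V, f⟩ - ε₂‖x‖²` is SOS
(where `⟨∇V, f⟩ = Σₖ (∂V/∂xₖ)·fₖ` and `‖x‖² = Σᵢ xᵢ²`), then:
(i) `V(x) ≥ ε₁‖x‖²` for all `x`, so `V` is positive definite and radially unbounded; and
(ii) for every `x ≠ 0` with `V(x) ≤ 1` one has `s₄(x) > 0` and `⟨∇V(x), f(x)⟩ < 0`. -/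
theorem expanding_interior_soundness
    {n : ℕ}
    (V : MvPolynomial (Fin n) ℝ)
    (f : Fin n → MvPolynomial (Fin n) ℝ)
    (ε₁ ε₂ : ℝ) (hε₁ : 0 < ε₁) (hε₂ : 0 < ε₂)
    (s₃ s₄ : MvPolynomial (Fin n) ℝ) (hs₃ : IsSOS s₃) (hs₄ : IsSOS s₄)
    (hVsos : IsSOS (V - C ε₁ * ∑ i, X i ^ 2))
    (hdsos : IsSOS (-s₃ * (1 - V) - s₄ * (∑ k, pderiv k V * f k) - C ε₂ * ∑ i, X i ^ 2)) :
    (∀ x : Fin n → ℝ,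
        ε₁ * ∑ i, (x i) ^ 2 ≤ eval x V ∧ (x ≠ 0 → 0 < eval x V)) ∧
    Filter.Tendsto (fun x : Fin n → ℝ => eval x V) (Filter.cocompact _) Filter.atTop ∧
    (∀ x : Fin n → ℝ, x ≠ 0 → eval x V ≤ 1 →
        0 < eval x s₄ ∧ eval x (∑ k, pderiv k V * f k) < 0) := by
  have key : ∀ x : Fin n → ℝ, ε₁ * ∑ i, (x i) ^ 2 ≤ eval x V := by
    intro x
    have h := sos_eval_nonneg hVsos x
    simp only [map_sub, map_mul, map_sum, map_pow, eval_C, eval_X] at h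
    linarith
  refine ⟨fun x => ⟨key x, fun hx => lt_of_lt_of_le (by have := sumsq_pos hx; positivity) (key x)⟩, ?_, ?_⟩
  · have h1 : Filter.Tendsto (fun x : Fin n → ℝ => ε₁ * ∑ i, (x i) ^ 2)
        (Filter.cocompact _) Filter.atTop := by
      apply Filter.Tendsto.const_mul_atTop hε₁
      have hnorm : Filter.Tendsto (fun x : Fin n → ℝ => ‖x‖ ^ 2)
          (Filter.cocompact _) Filter.atTop :=
        (Filter.tendsto_pow_atTop two_ne_zero).comp tendsto_norm_cocompact_atTop
      refine Filter.tendsto_atTop_mono (fun x => ?_) hnorm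
      have hle : ‖x‖ ≤ Real.sqrt (∑ i, (x i) ^ 2) := by
        rw [pi_norm_le_iff_of_nonneg (Real.sqrt_nonneg _)]
        intro i
        rw [Real.norm_eq_abs, ← Real.sqrt_sq_eq_abs]
        exact Real.sqrt_le_sqrt (Finset.single_le_sum (fun j _ => sq_nonneg (x j))
          (Finset.mem_univ i))
      calc ‖x‖ ^ 2 ≤ Real.sqrt (∑ i, (x i) ^ 2) ^ 2 :=
              pow_le_pow_left₀ (norm_nonneg _) hle 2
        _ = ∑ i, (x i) ^ 2 := Real.sq_sqrt (Finset.sum_nonneg fun i _ => sq_nonneg _)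
    exact Filter.tendsto_atTop_mono key h1
  · intro x hx hV1
    have h := sos_eval_nonneg hdsos x
    simp only [map_sub, map_mul, map_neg, map_sum, map_one, map_pow, eval_C, eval_X] at h
    have hgeq : eval x (∑ k, pderiv k V * f k) = ∑ k, eval x (pderiv k V) * eval x (f k) := by
      simp only [map_sum, map_mul]
    rw [hgeq]
    set g := ∑ k, eval x (pderiv k V) * eval x (f k) with hg
    have hs3x : 0 ≤ eval x s₃ := sos_eval_nonneg hs₃ x
    have hs4x : 0 ≤ eval x s₄ := sos_eval_nonneg hs₄ x
    have hsum : 0 < ∑ i, (x i) ^ 2 := sumsq_pos hx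
    have h1V : 0 ≤ 1 - eval x V := by linarith
    have hterm : 0 ≤ eval x s₃ * (1 - eval x V) := mul_nonneg hs3x h1V
    have hε₂sum : 0 < ε₂ * ∑ i, (x i) ^ 2 := mul_pos hε₂ hsum
    have hneg : eval x s₄ * g < 0 := by nlinarith
    constructor
    · rcases hs4x.lt_or_eq with h4 | h4
      · exact h4
      · exfalso; rw [← h4, zero_mul] at hneg; exact lt_irrefl 0 hneg
    · by_contra hge
      push_neg at hge
      exact absurd hneg (not_lt.2 (mul_nonneg hs4x hge))
end
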